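/- Let G and Q be symmetric positive definite l×l real matrices and define S by S⁻¹ = G⁻¹ + Q. For 1 ≤ r < l, with S̃ = Q^{1/2} S Q^{1/2}, G̃ = Q^{1/2} G Q^{1/2}, and P_r the orthogonal projection onto the top-r eigenspace of S̃, the map r ↦ tr(G̃ S̃⁻¹ P_r) − r is strictly increasing in r, with increment at step r equal to λ_{r+1}(G Q) > 0. -/

import Mathlib

/-!
Write `s = Q^{1/2}`, `M = s G s` and `A = s S s`. Conjugating `S⁻¹ = G⁻¹ + s s` by `s⁻¹`
gives `A⁻¹ = M⁻¹ + 1`, so the orthogonal `V` diagonalising `A = V diag(d) Vᵀ` also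
diagonalises `M`, with eigenvalues `g = (d⁻¹ - 1)⁻¹`; these decrease with `d`, so
`g_r = λ_{r+1}(M)`. In the basis `V`, `M A⁻¹ P_t` is `diag(g d⁻¹ 1_{<t})`, and raising `t`
from `r` to `r + 1` adds `g_r d_r⁻¹ = 1 + g_r` to its trace.
-/

open Matrix

open scoped ComplexOrder in
/-- The square root of a positive semi-definite matrix (its definition in the older Mathlib,
`Matrix.PosSemidef.sqrt`, which has since been removed). -/
noncomputable def Matrix.PosSemidef.sqrt {n 𝕜 : Type*} [Fintype n] [RCLike 𝕜] [DecidableEq n]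
    {A : Matrix n n 𝕜} (hA : A.PosSemidef) : Matrix n n 𝕜 :=
  hA.1.eigenvectorUnitary.1 * diagonal ((↑) ∘ Real.sqrt ∘ hA.1.eigenvalues) *
    (star hA.1.eigenvectorUnitary : Matrix n n 𝕜)

/-- The `i`-th largest value of `f` (descending sort). -/
noncomputable def sortedDesc {n : ℕ} (f : Fin n → ℝ) : Fin n → ℝ :=
  fun i => f (Tuple.sort f i.rev)

section OrthogonalConjugation

variable {n R : Type*} [Fintype n] [DecidableEq n]

theorem conj_diagonal_mul_conj_diagonal [CommRing R] {V : Matrix n n R} (hV : Vᵀ * V = 1)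
    (a b : n → R) :
    V * diagonal a * Vᵀ * (V * diagonal b * Vᵀ) = V * diagonal (a * b) * Vᵀ := by
  calc V * diagonal a * Vᵀ * (V * diagonal b * Vᵀ)
      = V * diagonal a * (Vᵀ * V) * diagonal b * Vᵀ := by simp only [Matrix.mul_assoc]
    _ = V * diagonal (a * b) * Vᵀ := by
      rw [hV, Matrix.mul_one, Matrix.mul_assoc V, diagonal_mul_diagonal]; rfl

theorem conj_diagonal_one [CommRing R] {V : Matrix n n R} (hV : Vᵀ * V = 1) :
    V * diagonal 1 * Vᵀ = 1 := by
  rw [show diagonal (1 : n → R) = 1 from diagonal_one, Matrix.mul_one, mul_eq_one_comm.mp hV]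

theorem inv_conj_diagonal [Field R] {V : Matrix n n R} (hV : Vᵀ * V = 1) {a : n → R}
    (ha : ∀ i, a i ≠ 0) : (V * diagonal a * Vᵀ)⁻¹ = V * diagonal a⁻¹ * Vᵀ := by
  refine inv_eq_right_inv ?_
  rw [conj_diagonal_mul_conj_diagonal hV,
    show a * a⁻¹ = 1 from funext fun i => mul_inv_cancel₀ (ha i), conj_diagonal_one hV]

theorem trace_conj_diagonal [CommRing R] {V : Matrix n n R} (hV : Vᵀ * V = 1) (a : n → R) :
    (V * diagonal a * Vᵀ).trace = ∑ i, a i := by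
  rw [trace_mul_cycle, hV, Matrix.one_mul, trace_diagonal]

open Polynomial in
theorem charpoly_conj_diagonal [CommRing R] {V : Matrix n n R} (hV : Vᵀ * V = 1) (a : n → R) :
    (V * diagonal a * Vᵀ).charpoly = ∏ i, (X - C (a i)) := by
  rw [Matrix.mul_assoc, charpoly_mul_comm, Matrix.mul_assoc, hV, Matrix.mul_one,
    charpoly_diagonal]

theorem pos_of_posDef_conj_diagonal {V : Matrix n n ℝ} (hV : Vᵀ * V = 1) {a : n → ℝ}
    (ha : (V * diagonal a * Vᵀ).PosDef) (i : n) : 0 < a i := by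
  have hVinj : Function.Injective V.mulVec := fun x y h => by
    simpa [mulVec_mulVec, hV] using congrArg (Vᵀ *ᵥ ·) h
  have hD := ha.conjTranspose_mul_mul_same hVinj
  rw [conjTranspose_eq_transpose_of_trivial, ← Matrix.mul_assoc, ← Matrix.mul_assoc, hV,
    Matrix.one_mul, Matrix.mul_assoc, hV, Matrix.mul_one] at hD
  exact posDef_diagonal_iff.mp hD i

theorem Matrix.IsHermitian.map_eigenvalues_eq_of_eq_conj_diagonal {A V : Matrix n n ℝ}
    (hA : A.IsHermitian) (hV : Vᵀ * V = 1) {a : n → ℝ} (hAV : A = V * diagonal a * Vᵀ) :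
    Finset.univ.val.map hA.eigenvalues = Finset.univ.val.map a := by
  have hroots : A.charpoly.roots = Finset.univ.val.map a := by
    rw [hAV, charpoly_conj_diagonal hV, Polynomial.roots_prod _ _ (by
      simp [Finset.prod_ne_zero_iff, Polynomial.X_sub_C_ne_zero])]
    simp
  simpa [hroots] using hA.roots_charpoly_eq_eigenvalues.symm

end OrthogonalConjugation

theorem sortedDesc_eq_of_map_eq {n : ℕ} {f g : Fin n → ℝ} (hg : Antitone g)
    (h : Finset.univ.val.map f = Finset.univ.val.map g) : sortedDesc f = g := by
  have hperm : ∀ (φ : Fin n → ℝ) (σ : Equiv.Perm (Fin n)),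
      Finset.univ.val.map (φ ∘ σ) = Finset.univ.val.map φ := fun φ σ => by
    rw [← Multiset.map_map, Multiset.map_univ_val_equiv]
  have hsorted : f ∘ Tuple.sort f = g ∘ Fin.revPerm := by
    apply List.ofFn_injective
    have hg' : Monotone (g ∘ Fin.revPerm) := fun i j hij => hg (Fin.rev_le_rev.mpr hij)
    refine List.Perm.eq_of_sortedLE (Tuple.monotone_sort f).sortedLE_ofFn hg'.sortedLE_ofFn
      (Multiset.coe_eq_coe.mp ?_)
    rw [← Fin.univ_val_map, ← Fin.univ_val_map, hperm, hperm, h]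
  funext i
  simpa [sortedDesc] using congrFun hsorted i.rev

theorem sum_mul_ite_lt_succ_sub_sum_mul_ite_lt {R : Type*} [CommRing R] {l r : ℕ} (hr : r < l)
    (f : Fin l → R) :
    ∑ i : Fin l, f i * (if (i : ℕ) < r + 1 then 1 else 0)
      - ∑ i : Fin l, f i * (if (i : ℕ) < r then 1 else 0) = f ⟨r, hr⟩ := by
  rw [← Finset.sum_sub_distrib, ← Fintype.sum_ite_eq' ⟨r, hr⟩ f]
  refine Finset.sum_congr rfl fun i _ => ?_
  simp only [Fin.ext_iff]
  split_ifs <;> simp <;> omega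

section Sqrt

variable {n 𝕜 : Type*} [Fintype n] [RCLike 𝕜] [DecidableEq n]

open scoped ComplexOrder

theorem Matrix.PosSemidef.isHermitian_sqrt {A : Matrix n n 𝕜} (hA : A.PosSemidef) :
    hA.sqrt.IsHermitian := by
  rw [Matrix.PosSemidef.sqrt, star_eq_conjTranspose]
  exact isHermitian_mul_mul_conjTranspose _
    (isHermitian_diagonal_iff.mpr fun _ => RCLike.conj_ofReal _)

theorem Matrix.PosSemidef.sqrt_mul_self {A : Matrix n n 𝕜} (hA : A.PosSemidef) :
    hA.sqrt * hA.sqrt = A := by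
  set U : Matrix n n 𝕜 := hA.1.eigenvectorUnitary.1
  have hU : star U * U = 1 := Unitary.star_mul_self_of_mem hA.1.eigenvectorUnitary.2
  have hD : diagonal ((↑) ∘ Real.sqrt ∘ hA.1.eigenvalues) *
      diagonal ((↑) ∘ Real.sqrt ∘ hA.1.eigenvalues) =
      diagonal (RCLike.ofReal ∘ hA.1.eigenvalues : n → 𝕜) := by
    rw [diagonal_mul_diagonal]
    congr 1; funext i
    simp only [Function.comp_apply, ← RCLike.ofReal_mul,
      Real.mul_self_sqrt (hA.eigenvalues_nonneg i)]
  conv_rhs => rw [hA.1.spectral_theorem, Unitary.conjStarAlgAut_apply]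
  calc hA.sqrt * hA.sqrt
      = U * diagonal ((↑) ∘ Real.sqrt ∘ hA.1.eigenvalues) * (star U * U) *
          diagonal ((↑) ∘ Real.sqrt ∘ hA.1.eigenvalues) * star U := by
        simp only [Matrix.PosSemidef.sqrt, U, Matrix.mul_assoc]
    _ = _ := by rw [hU, Matrix.mul_one, Matrix.mul_assoc U, hD]

theorem Matrix.PosDef.isUnit_sqrt {A : Matrix n n 𝕜} (hA : A.PosDef) :
    IsUnit hA.posSemidef.sqrt := by
  rw [isUnit_iff_isUnit_det]
  have hdet := (isUnit_iff_isUnit_det A).mp hA.isUnit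
  rw [← hA.posSemidef.sqrt_mul_self, det_mul] at hdet
  exact isUnit_of_mul_isUnit_left hdet

theorem Matrix.PosDef.mul_mul_of_isHermitian {A B : Matrix n n 𝕜} (hA : A.PosDef)
    (hB : B.IsHermitian) (hBu : IsUnit B) : (B * A * B).PosDef := by
  simpa only [hB.eq] using hA.conjTranspose_mul_mul_same (mulVec_injective_iff_isUnit.mpr hBu)

end Sqrt

section InverseIdentity

variable {n : Type*} [Fintype n] [DecidableEq n]

theorem inv_mul_inv_inv_add_mul_eq_inv_add_one {K : Type*} [Field K] {G Q s : Matrix n n K}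
    (hsQ : s * s = Q) (hs : IsUnit s.det) (hGQ : IsUnit (G⁻¹ + Q).det) :
    (s * (G⁻¹ + Q)⁻¹ * s)⁻¹ = (s * G * s)⁻¹ + 1 := by
  subst hsQ
  simp only [Matrix.mul_inv_rev, nonsing_inv_nonsing_inv _ hGQ, Matrix.add_mul, Matrix.mul_add,
    Matrix.mul_assoc, mul_nonsing_inv _ hs, Matrix.mul_one, nonsing_inv_mul _ hs]

theorem eq_conj_diagonal_of_inv_eq_inv_add_one {M V : Matrix n n ℝ} (hV : Vᵀ * V = 1)
    (hM : M.PosDef) {d : n → ℝ} (hd : ∀ i, 0 < d i)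
    (hinv : (V * diagonal d * Vᵀ)⁻¹ = M⁻¹ + 1) :
    M = V * diagonal (d⁻¹ - 1)⁻¹ * Vᵀ ∧ ∀ i, 0 < (d i)⁻¹ - 1 := by
  have hMinv : M⁻¹ = V * diagonal (d⁻¹ - 1) * Vᵀ := by
    rw [eq_sub_of_add_eq hinv.symm, inv_conj_diagonal hV fun i => (hd i).ne',
      ← conj_diagonal_one hV, ← Matrix.sub_mul, ← Matrix.mul_sub, diagonal_sub]
    rfl
  have he := pos_of_posDef_conj_diagonal hV (hMinv ▸ hM.inv)
  refine ⟨?_, he⟩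
  rw [← nonsing_inv_nonsing_inv M hM.det_pos.ne'.isUnit, hMinv,
    inv_conj_diagonal hV fun i => (he i).ne']

end InverseIdentity

theorem stmt_10_general {l : ℕ} (G Q : Matrix (Fin l) (Fin l) ℝ) (hG : G.PosDef) (hQ : Q.PosDef)
    (r : ℕ) (hrl : r < l)
    (V : Matrix (Fin l) (Fin l) ℝ) (d : Fin l → ℝ)
    (hV : Vᵀ * V = 1) (hd : Antitone d)
    (hSdec : hQ.posSemidef.sqrt * (G⁻¹ + Q)⁻¹ * hQ.posSemidef.sqrt = V * diagonal d * Vᵀ) :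
    ∀ hM : (hQ.posSemidef.sqrt * G * hQ.posSemidef.sqrt).IsHermitian,
      ((hQ.posSemidef.sqrt * G * hQ.posSemidef.sqrt *
          (hQ.posSemidef.sqrt * (G⁻¹ + Q)⁻¹ * hQ.posSemidef.sqrt)⁻¹ *
          (V * diagonal (fun i : Fin l => if (i : ℕ) < r + 1 then (1 : ℝ) else 0) * Vᵀ)).trace
        - (r + 1 : ℝ)) -
      ((hQ.posSemidef.sqrt * G * hQ.posSemidef.sqrt *
          (hQ.posSemidef.sqrt * (G⁻¹ + Q)⁻¹ * hQ.posSemidef.sqrt)⁻¹ *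
          (V * diagonal (fun i : Fin l => if (i : ℕ) < r then (1 : ℝ) else 0) * Vᵀ)).trace
        - (r : ℝ)) = sortedDesc hM.eigenvalues ⟨r, hrl⟩ ∧
      0 < sortedDesc hM.eigenvalues ⟨r, hrl⟩ := by
  intro hM
  set s := hQ.posSemidef.sqrt
  have hs : IsUnit s := hQ.isUnit_sqrt
  have hMpd : (s * G * s).PosDef := hG.mul_mul_of_isHermitian hQ.posSemidef.isHermitian_sqrt hs
  have hApd : (V * diagonal d * Vᵀ).PosDef :=
    hSdec ▸ (hG.inv.add hQ).inv.mul_mul_of_isHermitian hQ.posSemidef.isHermitian_sqrt hs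
  have hdpos := pos_of_posDef_conj_diagonal hV hApd
  have hinv : (V * diagonal d * Vᵀ)⁻¹ = (s * G * s)⁻¹ + 1 := hSdec ▸
    inv_mul_inv_inv_add_mul_eq_inv_add_one hQ.posSemidef.sqrt_mul_self
      ((isUnit_iff_isUnit_det s).mp hs) (hG.inv.add hQ).det_pos.ne'.isUnit
  obtain ⟨hMdiag, he⟩ := eq_conj_diagonal_of_inv_eq_inv_add_one hV hMpd hdpos hinv
  set g : Fin l → ℝ := (d⁻¹ - 1)⁻¹
  have hg : Antitone g := fun i j hij =>
    inv_anti₀ (he i) (sub_le_sub_right (inv_anti₀ (hdpos j) (hd hij)) 1)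
  have htrace : ∀ t : ℕ, (s * G * s * (s * (G⁻¹ + Q)⁻¹ * s)⁻¹ *
      (V * diagonal (fun i : Fin l => if (i : ℕ) < t then (1 : ℝ) else 0) * Vᵀ)).trace =
      ∑ i, (g * d⁻¹) i * (if (i : ℕ) < t then 1 else 0) := fun t => by
    rw [hSdec, inv_conj_diagonal hV fun i => (hdpos i).ne', hMdiag,
      conj_diagonal_mul_conj_diagonal hV, conj_diagonal_mul_conj_diagonal hV,
      trace_conj_diagonal hV]
    rfl
  -- `sortedDesc f i` unfolds to a value of `f`.
  refine ⟨?_, hMpd.eigenvalues_pos _⟩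
  have hgd : (g * d⁻¹) ⟨r, hrl⟩ = 1 + g ⟨r, hrl⟩ := by
    have := (he ⟨r, hrl⟩).ne'
    simp only [g, Pi.mul_apply, Pi.inv_apply, Pi.sub_apply, Pi.one_apply]
    generalize (d ⟨r, hrl⟩)⁻¹ = x at this ⊢
    field_simp
    ring
  rw [htrace, htrace,
    sortedDesc_eq_of_map_eq hg (hM.map_eigenvalues_eq_of_eq_conj_diagonal hV hMdiag)]
  linear_combination sum_mul_ite_lt_succ_sub_sum_mul_ite_lt hrl (g * d⁻¹) + hgd

/-- Monotonicity of the reduced-rank MAI index in the rank: with `S⁻¹ = G⁻¹ + Q`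
(i.e. `S = (G⁻¹ + Q)⁻¹`), `S̃ = Q^{1/2} S Q^{1/2}`, `G̃ = Q^{1/2} G Q^{1/2}`, and `P_r` the
top-`r` spectral projection of `S̃` (given by a spectral decomposition with nonincreasing
eigenvalues), the increment of `r ↦ tr(G̃ S̃⁻¹ P_r) − r` at step `r` is
`λ_{r+1}(G Q) > 0`, the `(r+1)`-st largest eigenvalue of `G Q` (equivalently of the
similar symmetric matrix `Q^{1/2} G Q^{1/2}`). -/
theorem stmt_10 {l : ℕ} (G Q : Matrix (Fin l) (Fin l) ℝ) (hG : G.PosDef) (hQ : Q.PosDef)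
    (r : ℕ) (hr1 : 1 ≤ r) (hrl : r < l)
    (V : Matrix (Fin l) (Fin l) ℝ) (d : Fin l → ℝ)
    (hV : Vᵀ * V = 1) (hd : Antitone d)
    (hSdec : hQ.posSemidef.sqrt * (G⁻¹ + Q)⁻¹ * hQ.posSemidef.sqrt = V * diagonal d * Vᵀ) :
    ∀ hM : (hQ.posSemidef.sqrt * G * hQ.posSemidef.sqrt).IsHermitian,
      ((hQ.posSemidef.sqrt * G * hQ.posSemidef.sqrt *
          (hQ.posSemidef.sqrt * (G⁻¹ + Q)⁻¹ * hQ.posSemidef.sqrt)⁻¹ *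
          (V * diagonal (fun i : Fin l => if (i : ℕ) < r + 1 then (1 : ℝ) else 0) * Vᵀ)).trace
        - (r + 1 : ℝ)) -
      ((hQ.posSemidef.sqrt * G * hQ.posSemidef.sqrt *
          (hQ.posSemidef.sqrt * (G⁻¹ + Q)⁻¹ * hQ.posSemidef.sqrt)⁻¹ *
          (V * diagonal (fun i : Fin l => if (i : ℕ) < r then (1 : ℝ) else 0) * Vᵀ)).trace
        - (r : ℝ)) = sortedDesc hM.eigenvalues ⟨r, hrl⟩ ∧
      0 < sortedDesc hM.eigenvalues ⟨r, hrl⟩ :=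
  stmt_10_general G Q hG hQ r hrl V d hV hd hSdec
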